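/- arXiv:1509.03842 — 7 statements merged into one kernel-verified Lean document; each statement's English description precedes it below -/
import Mathlib

section
/- Let Q be a subset of EuclideanSpace ℝ (Fin N), let p : Fin n → EuclideanSpace ℝ (Fin N) be points with p i ∈ Q for every i, and let w : Fin n → ℝ be weights, with power cells P i. Then every generator lies in its own power cell, i.e. p i ∈ P i for all i (the power diagram has no occupancy defect), if and only if |(w i)^2 - (w j)^2| ≤ ‖p i - p j‖^2 for all i ≠ j. -/
open Metric Set

/-- The power cell of index `i` for environment `Q`, points `p` and weights `w`. -/
def powerCell {N n : ℕ} (Q : Set (EuclideanSpace ℝ (Fin N)))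
    (p : Fin n → EuclideanSpace ℝ (Fin N)) (w : Fin n → ℝ) (i : Fin n) :
    Set (EuclideanSpace ℝ (Fin N)) :=
  {q ∈ Q | ∀ j, ‖q - p i‖ ^ 2 - (w i) ^ 2 ≤ ‖q - p j‖ ^ 2 - (w j) ^ 2}

/-- A power diagram has no occupancy defect iff
`|(w i)^2 - (w j)^2| ≤ ‖p i - p j‖^2` for all `i ≠ j`. -/
theorem no_occupancy_defect_iff {N n : ℕ} (Q : Set (EuclideanSpace ℝ (Fin N)))
    (p : Fin n → EuclideanSpace ℝ (Fin N)) (w : Fin n → ℝ)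
    (hp : ∀ i, p i ∈ Q) :
    (∀ i, p i ∈ powerCell Q p w i) ↔
      ∀ i j, i ≠ j → |(w i) ^ 2 - (w j) ^ 2| ≤ ‖p i - p j‖ ^ 2 := by
  constructor
  · intro h i j hij
    have h1 := (h i).2 j
    have h2 := (h j).2 i
    simp only [sub_self, norm_zero] at h1 h2
    rw [abs_sub_le_iff]
    constructor
    · have := h2
      rw [norm_sub_rev] at this
      linarith
    · linarith
  · intro h i
    refine ⟨hp i, fun j => ?_⟩
    by_cases hij : i = j
    · subst hij; simp
    · have := h j i (Ne.symm hij)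
      rw [abs_sub_le_iff, norm_sub_rev] at this
      have hn : (0:ℝ) ≤ ‖p i - p i‖ ^ 2 := by positivity
      simp only [sub_self, norm_zero]
      nlinarith [this.1]
end

section
/- Let Q be a closed convex subset of EuclideanSpace ℝ (Fin N), let p : Fin n → EuclideanSpace ℝ (Fin N), and let ρ : Fin n → ℝ with 0 ≤ ρ i for all i, such that for all i ≠ j either p i ≠ p j or ρ i ≠ ρ j. Let P i be the power cells of (Q, p, ρ) (weights equal to the radii ρ). Then the configuration p is collision-free in Q with radii ρ if and only if Metric.closedBall (p i) (ρ i) ⊆ interior (P i) for every i. -/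
open Metric Set

/-- A configuration `p` with radii `ρ` is collision free in `Q`. -/
def CollisionFree {N n : ℕ} (Q : Set (EuclideanSpace ℝ (Fin N)))
    (p : Fin n → EuclideanSpace ℝ (Fin N)) (ρ : Fin n → ℝ) : Prop :=
  (∀ i j, i ≠ j → ρ i + ρ j < ‖p i - p j‖) ∧
    ∀ i, Metric.closedBall (p i) (ρ i) ⊆ interior Q

/-!
Writing `d = ‖p i - p j‖`, the power-cell inequality between `i` and `j` is linear in `q`:
it says `⟪q - p i, p j - p i⟫ ≤ (d ^ 2 + ρ i ^ 2 - ρ j ^ 2) / 2`, a half-space bounded by the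
radical hyperplane of the two spheres. If the ball of radius `ρ i` lies in the interior of this
half-space, its point nearest to `p j` gives the strict inequality
`ρ i * d < (d ^ 2 + ρ i ^ 2 - ρ j ^ 2) / 2`; adding the same inequality for `j` yields
`ρ i + ρ j < d`. Conversely, when the balls are disjoint the power inequalities hold strictly on
the closed ball of `i`, and strict inequalities between continuous functions cut out an open set.
-/

open Filter Topology
open scoped RealInnerProductSpace

section PowerDistance

variable {E : Type*} [NormedAddCommGroup E]

def powerDist (q a : E) (r : ℝ) : ℝ := ‖q - a‖ ^ 2 - r ^ 2

theorem continuous_powerDist (a : E) (r : ℝ) : Continuous fun q ↦ powerDist q a r := by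
  unfold powerDist
  fun_prop

theorem powerDist_lt_powerDist_of_mem_closedBall {q a b : E} {r s : ℝ} (hs : 0 ≤ s)
    (hq : q ∈ closedBall a r) (hab : r + s < ‖a - b‖) :
    powerDist q a r < powerDist q b s := by
  have hqa : ‖q - a‖ ≤ r := by rwa [← dist_eq_norm, ← mem_closedBall]
  have hqb : s < ‖q - b‖ := by
    have := norm_sub_le_norm_sub_add_norm_sub a q b
    rw [norm_sub_rev a q] at this
    linarith
  have : ‖q - a‖ ^ 2 ≤ r ^ 2 := pow_le_pow_left₀ (norm_nonneg _) hqa 2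
  have : s ^ 2 < ‖q - b‖ ^ 2 := pow_lt_pow_left₀ hqb hs two_ne_zero
  unfold powerDist
  linarith

variable [InnerProductSpace ℝ E]

theorem powerDist_le_powerDist_iff (q a b : E) (r s : ℝ) :
    powerDist q a r ≤ powerDist q b s ↔
      ⟪q - a, b - a⟫ ≤ (‖b - a‖ ^ 2 + r ^ 2 - s ^ 2) / 2 := by
  have h : ‖q - b‖ ^ 2 = ‖q - a‖ ^ 2 - 2 * ⟪q - a, b - a⟫ + ‖b - a‖ ^ 2 := by
    rw [← norm_sub_sq_real, sub_sub_sub_cancel_right]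
  unfold powerDist
  constructor <;> intro <;> linarith

theorem inner_sub_lt_of_mem_interior {a v x : E} {c : ℝ} (hv : v ≠ 0)
    (hx : x ∈ interior {y | ⟪y - a, v⟫ ≤ c}) : ⟪x - a, v⟫ < c := by
  have hline : Tendsto (fun t : ℝ ↦ x + t • v) (𝓝[>] 0) (𝓝 x) :=
    tendsto_nhdsWithin_of_tendsto_nhds
      ((by fun_prop : Continuous fun t : ℝ ↦ x + t • v).tendsto' 0 x (by simp))
  obtain ⟨t, ht, ht0⟩ :=
    ((hline.eventually (mem_interior_iff_mem_nhds.mp hx)).and self_mem_nhdsWithin).exists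
  have hstep : ⟪x + t • v - a, v⟫ = ⟪x - a, v⟫ + t * ‖v‖ ^ 2 := by
    rw [add_sub_right_comm, inner_add_left, inner_smul_left, real_inner_self_eq_norm_sq]
    rfl
  have : 0 < t * ‖v‖ ^ 2 := mul_pos ht0 (by positivity)
  rw [hstep] at ht
  linarith

theorem mul_norm_lt_of_closedBall_subset_interior {a b : E} {r s : ℝ} (hr : 0 ≤ r)
    (hab : a ≠ b) (h : closedBall a r ⊆ interior {q | powerDist q a r ≤ powerDist q b s}) :
    r * ‖b - a‖ < (‖b - a‖ ^ 2 + r ^ 2 - s ^ 2) / 2 := by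
  have hd : 0 < ‖b - a‖ := norm_sub_pos_iff.mpr hab.symm
  set q := a + (r / ‖b - a‖) • (b - a)
  have hqa : q - a = (r / ‖b - a‖) • (b - a) := add_sub_cancel_left _ _
  have hq : q ∈ closedBall a r := by
    rw [mem_closedBall, dist_eq_norm, hqa, norm_smul, Real.norm_of_nonneg (by positivity),
      div_mul_cancel₀ _ hd.ne']
  have hlt := inner_sub_lt_of_mem_interior (sub_ne_zero.mpr hab.symm)
    (by simpa only [powerDist_le_powerDist_iff] using h hq)
  have hinner : ⟪q - a, b - a⟫ = r * ‖b - a‖ := by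
    rw [hqa, real_inner_smul_left, real_inner_self_eq_norm_sq]
    field_simp
  rwa [hinner] at hlt

theorem add_lt_norm_sub_of_closedBall_subset_interior {a b : E} {r s : ℝ} (hr : 0 ≤ r)
    (hs : 0 ≤ s) (hab : a ≠ b)
    (ha : closedBall a r ⊆ interior {q | powerDist q a r ≤ powerDist q b s})
    (hb : closedBall b s ⊆ interior {q | powerDist q b s ≤ powerDist q a r}) :
    r + s < ‖a - b‖ := by
  have hra := mul_norm_lt_of_closedBall_subset_interior hr hab ha
  have hsb := mul_norm_lt_of_closedBall_subset_interior hs hab.symm hb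
  have hd : 0 < ‖a - b‖ := norm_sub_pos_iff.mpr hab
  rw [norm_sub_rev] at hra
  nlinarith

end PowerDistance

section PowerCell

variable {N n : ℕ} {Q : Set (EuclideanSpace ℝ (Fin N))} {p : Fin n → EuclideanSpace ℝ (Fin N)}
  {w : Fin n → ℝ}

theorem powerCell_eq_inter_iInter (i : Fin n) :
    powerCell Q p w i = Q ∩ ⋂ j, {q | powerDist q (p i) (w i) ≤ powerDist q (p j) (w j)} := by
  ext q
  simp only [powerCell, powerDist, mem_inter_iff, mem_iInter, mem_ofPred_eq]

theorem powerCell_subset_setOf_powerDist_le (i j : Fin n) :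
    powerCell Q p w i ⊆ {q | powerDist q (p i) (w i) ≤ powerDist q (p j) (w j)} :=
  fun _ hq ↦ hq.2 j

theorem eq_of_mem_powerCell_of_eq {i j : Fin n} (hwi : 0 ≤ w i) (hwj : 0 ≤ w j)
    (hi : p i ∈ powerCell Q p w i) (hj : p j ∈ powerCell Q p w j) (he : p i = p j) :
    w i = w j := by
  have hij := hi.2 j
  have hji := hj.2 i
  rw [he, sub_self, norm_zero] at hij hji
  exact (sq_eq_sq₀ hwi hwj).mp (by linarith)

theorem closedBall_subset_interior_powerCell {ρ : Fin n → ℝ} (hρ : ∀ i, 0 ≤ ρ i)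
    (hc : CollisionFree Q p ρ) (i : Fin n) :
    closedBall (p i) (ρ i) ⊆ interior (powerCell Q p ρ i) := by
  rw [powerCell_eq_inter_iInter, interior_inter, interior_iInter_of_finite]
  refine subset_inter (hc.2 i) (subset_iInter fun j ↦ ?_)
  obtain rfl | hji := eq_or_ne j i
  · simp
  refine fun q hq ↦ interior_maximal (fun _ ↦ le_of_lt)
    (isOpen_lt (continuous_powerDist _ _) (continuous_powerDist _ _)) ?_
  exact powerDist_lt_powerDist_of_mem_closedBall (hρ j) hq (hc.1 i j hji.symm)

theorem add_lt_norm_sub_of_closedBall_subset_interior_powerCell {ρ : Fin n → ℝ}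
    (hρ : ∀ i, 0 ≤ ρ i) (hnd : ∀ i j, i ≠ j → p i ≠ p j ∨ ρ i ≠ ρ j)
    (h : ∀ i, closedBall (p i) (ρ i) ⊆ interior (powerCell Q p ρ i)) {i j : Fin n}
    (hij : i ≠ j) : ρ i + ρ j < ‖p i - p j‖ := by
  have hcenter k : p k ∈ powerCell Q p ρ k := interior_subset (h k (mem_closedBall_self (hρ k)))
  have hne : p i ≠ p j := fun he ↦ (hnd i j hij).elim (· he)
    (· (eq_of_mem_powerCell_of_eq (hρ i) (hρ j) (hcenter i) (hcenter j) he))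
  exact add_lt_norm_sub_of_closedBall_subset_interior (hρ i) (hρ j) hne
    ((h i).trans (interior_mono (powerCell_subset_setOf_powerDist_le i j)))
    ((h j).trans (interior_mono (powerCell_subset_setOf_powerDist_le j i)))

end PowerCell

theorem collisionFree_iff_body_in_interior_powerCell_general {N n : ℕ}
    (Q : Set (EuclideanSpace ℝ (Fin N)))
    (p : Fin n → EuclideanSpace ℝ (Fin N)) (ρ : Fin n → ℝ)
    (hρ : ∀ i, 0 ≤ ρ i)
    (hnd : ∀ i j, i ≠ j → p i ≠ p j ∨ ρ i ≠ ρ j) :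
    CollisionFree Q p ρ ↔
      ∀ i, Metric.closedBall (p i) (ρ i) ⊆ interior (powerCell Q p ρ i) :=
  ⟨closedBall_subset_interior_powerCell hρ, fun h ↦
    ⟨fun _ _ ↦ add_lt_norm_sub_of_closedBall_subset_interior_powerCell hρ hnd h,
      fun i ↦ (h i).trans (interior_mono (sep_subset _ _))⟩⟩

/-- A configuration is collision free iff every robot body is contained in the
interior of its body power cell. -/
theorem collisionFree_iff_body_in_interior_powerCell {N n : ℕ}
    (Q : Set (EuclideanSpace ℝ (Fin N))) (hQc : IsClosed Q) (hQconv : Convex ℝ Q)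
    (p : Fin n → EuclideanSpace ℝ (Fin N)) (ρ : Fin n → ℝ)
    (hρ : ∀ i, 0 ≤ ρ i)
    (hnd : ∀ i j, i ≠ j → p i ≠ p j ∨ ρ i ≠ ρ j) :
    CollisionFree Q p ρ ↔
      ∀ i, Metric.closedBall (p i) (ρ i) ⊆ interior (powerCell Q p ρ i) :=
  collisionFree_iff_body_in_interior_powerCell_general Q p ρ hρ hnd
end

section
/- Let p_i ≠ p_j be points in EuclideanSpace ℝ (Fin N) and ρ_i, ρ_j real numbers with 0 ≤ ρ_i, 0 ≤ ρ_j and ρ_i + ρ_j < ‖p_i - p_j‖ (nonoverlapping disks). Let H be the power bisector with weights w_i = ρ_i and w_j = ρ_j. Then Metric.infDist p_i H > ρ_i. -/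
open Metric Set
open scoped RealInnerProductSpace

/-! The power bisector is the hyperplane `⟪x, v⟫ = c` with `v = pᵢ - pⱼ`, whose distance from `pᵢ`
is `|⟪pᵢ, v⟫ - c| / ‖v‖ = (‖v‖² + ρᵢ² - ρⱼ²) / (2‖v‖)`. This exceeds `ρᵢ` exactly when
`(‖v‖ - ρᵢ)² > ρⱼ²`, which holds because `‖v‖ - ρᵢ > ρⱼ ≥ 0`. -/

section Hyperplane

variable {E : Type*} [NormedAddCommGroup E] [InnerProductSpace ℝ E]

theorem infDist_setOf_inner_eq (p : E) {v : E} (hv : v ≠ 0) (c : ℝ) :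
    infDist p {x | ⟪x, v⟫ = c} = |⟪p, v⟫ - c| / ‖v‖ := by
  have hv' : 0 < ‖v‖ := norm_pos_iff.2 hv
  set foot := p - ((⟪p, v⟫ - c) / ‖v‖ ^ 2) • v
  have hfoot : foot ∈ {x | ⟪x, v⟫ = c} := by
    simp only [foot, mem_ofPred_eq, inner_sub_left, real_inner_smul_left,
      real_inner_self_eq_norm_sq]
    field_simp
    ring
  refine le_antisymm ?_ ((le_infDist ⟨foot, hfoot⟩).2 fun x hx => ?_)
  · calc infDist p {x | ⟪x, v⟫ = c} ≤ dist p foot := infDist_le_dist_of_mem hfoot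
      _ = |⟪p, v⟫ - c| / ‖v‖ := by
        rw [dist_eq_norm, sub_sub_cancel, norm_smul, Real.norm_eq_abs, abs_div,
          abs_of_pos (pow_pos hv' 2)]
        field_simp
  · have hx : ⟪x, v⟫ = c := hx
    rw [div_le_iff₀ hv', dist_eq_norm, ← hx, ← inner_sub_left]
    exact abs_real_inner_le_norm _ _

end Hyperplane

theorem radius_lt_infDist_to_power_bisector_general {N : ℕ}
    (pi pj : EuclideanSpace ℝ (Fin N)) (ρi ρj : ℝ)
    (hρj : 0 ≤ ρj) (hsep : ρi + ρj < ‖pi - pj‖) (hij : pi ≠ pj) :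
    Metric.infDist pi
        {x : EuclideanSpace ℝ (Fin N) |
          2 * ⟪x, pi - pj⟫ = ρj ^ 2 - ρi ^ 2 + ‖pi‖ ^ 2 - ‖pj‖ ^ 2} > ρi := by
  set v := pi - pj
  set c := (ρj ^ 2 - ρi ^ 2 + ‖pi‖ ^ 2 - ‖pj‖ ^ 2) / 2
  have hv : v ≠ 0 := sub_ne_zero.2 hij
  have hH : {x | 2 * ⟪x, v⟫ = ρj ^ 2 - ρi ^ 2 + ‖pi‖ ^ 2 - ‖pj‖ ^ 2} = {x | ⟪x, v⟫ = c} := by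
    ext x
    simp only [mem_ofPred_eq, c]
    constructor <;> intro h <;> linarith
  have hoffset : ⟪pi, v⟫ - c = (‖v‖ ^ 2 + ρi ^ 2 - ρj ^ 2) / 2 := by
    simp only [v, c, inner_sub_right, real_inner_self_eq_norm_sq, norm_sub_sq_real]
    ring
  rw [hH, infDist_setOf_inner_eq pi hv c, hoffset, gt_iff_lt,
    lt_div_iff₀ (norm_pos_iff.2 hv)]
  calc ρi * ‖v‖ < (‖v‖ ^ 2 + ρi ^ 2 - ρj ^ 2) / 2 := by
        nlinarith [mul_self_lt_mul_self hρj (show ρj < ‖v‖ - ρi by linarith)]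
    _ ≤ |(‖v‖ ^ 2 + ρi ^ 2 - ρj ^ 2) / 2| := le_abs_self _

/-- For nonoverlapping disks, the distance from the center `pᵢ` to the power bisector
(with weights equal to the radii) exceeds the radius `ρᵢ`. -/
theorem radius_lt_infDist_to_power_bisector {N : ℕ}
    (pi pj : EuclideanSpace ℝ (Fin N)) (ρi ρj : ℝ)
    (hρi : 0 ≤ ρi) (hρj : 0 ≤ ρj) (hsep : ρi + ρj < ‖pi - pj‖) (hij : pi ≠ pj) :
    Metric.infDist pi
        {x : EuclideanSpace ℝ (Fin N) |
          2 * ⟪x, pi - pj⟫ = ρj ^ 2 - ρi ^ 2 + ‖pi‖ ^ 2 - ‖pj‖ ^ 2} > ρi :=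
  radius_lt_infDist_to_power_bisector_general pi pj ρi ρj hρj hsep hij
end

section
/- Let C be a closed convex subset of EuclideanSpace ℝ (Fin N) and let ρ be a real number with 0 ≤ ρ. Then the erosion {x ∈ C | ρ < Metric.infDist x (frontier C)} of C by the closed ball of radius ρ is a convex open subset of EuclideanSpace ℝ (Fin N). -/
/-!
For a closed convex `C`, the closed ball of radius `infDist x (frontier C)` about a point
`x ∈ C` lies in `C`. Averaging two such balls by Minkowski combination gives a ball about
`a • x + b • y` of radius `a * infDist x (frontier C) + b * infDist y (frontier C)` inside `C`,
so the distance to the frontier is concave on `C` and its strict superlevel sets are convex.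
For `0 ≤ ρ` these superlevel sets avoid the frontier, hence lie in the interior, and are open.
-/

open Metric Set Pointwise

theorem IsPreconnected.subset_interior_of_disjoint_frontier {X : Type*} [TopologicalSpace X]
    {s t : Set X} (hs : IsPreconnected s) (hst : (s ∩ t).Nonempty)
    (hd : Disjoint s (frontier t)) : s ⊆ interior t := by
  have mem_interior {z : X} (hzs : z ∈ s) (hzt : z ∈ closure t) : z ∈ interior t := by
    by_contra hzi
    exact hd.notMem_of_mem_left hzs ⟨hzt, hzi⟩
  obtain ⟨x, hxs, hxt⟩ := hst
  refine hs.subset_of_closure_inter_subset isOpen_interior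
    ⟨x, hxs, mem_interior hxs (subset_closure hxt)⟩ ?_
  rintro z ⟨hz, hzs⟩
  exact mem_interior hzs (closure_mono interior_subset hz)

theorem le_infDist_frontier_of_ball_subset {X : Type*} [PseudoMetricSpace X] {s : Set X} {x : X}
    {r : ℝ} (h : ball x r ⊆ s) (hne : (frontier s).Nonempty) : r ≤ infDist x (frontier s) :=
  (le_infDist hne).2 fun _ hp =>
    not_lt.1 fun hlt => hp.2 (interior_maximal h isOpen_ball (mem_ball'.2 hlt))

theorem isOpen_sep_lt_infDist_frontier {X : Type*} [PseudoMetricSpace X] (s : Set X) {ρ : ℝ}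
    (hρ : 0 ≤ ρ) : IsOpen {x ∈ s | ρ < infDist x (frontier s)} := by
  have hinterior : {x ∈ s | ρ < infDist x (frontier s)} =
      interior s ∩ {x | ρ < infDist x (frontier s)} := by
    ext x
    refine ⟨fun ⟨hx, hρx⟩ => ⟨(mem_interior_iff_notMem_frontier hx).2 fun hf => ?_, hρx⟩,
      fun ⟨hi, hρx⟩ => ⟨interior_subset hi, hρx⟩⟩
    rw [infDist_zero_of_mem hf] at hρx
    linarith
  rw [hinterior]
  exact isOpen_interior.inter (isOpen_lt continuous_const (continuous_infDist_pt _))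

section NormedSpace

variable {E : Type*} [NormedAddCommGroup E] [NormedSpace ℝ E] {C : Set E} {x : E}

theorem ball_infDist_frontier_subset_interior (hx : x ∈ C) :
    ball x (infDist x (frontier C)) ⊆ interior C := by
  rcases le_or_gt (infDist x (frontier C)) 0 with hd | hd
  · simp [ball_eq_empty.2 hd]
  · exact (convex_ball x _).isPreconnected.subset_interior_of_disjoint_frontier
      ⟨x, mem_ball_self hd, hx⟩ disjoint_ball_infDist

theorem IsClosed.closedBall_infDist_frontier_subset (hC : IsClosed C) (hx : x ∈ C) :
    closedBall x (infDist x (frontier C)) ⊆ C := by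
  rcases eq_or_ne (infDist x (frontier C)) 0 with hd | hd
  · simpa [hd] using hx
  · rw [← closure_ball x hd]
    exact closure_minimal ((ball_infDist_frontier_subset_interior hx).trans interior_subset) hC

theorem IsClosed.concaveOn_infDist_frontier [ProperSpace E] (hCc : IsClosed C)
    (hC : Convex ℝ C) : ConcaveOn ℝ C fun x => infDist x (frontier C) := by
  refine ⟨hC, fun x hx y hy a b ha hb hab => ?_⟩
  rcases (frontier C).eq_empty_or_nonempty with hempty | hne
  · simp [hempty]
  set dx := infDist x (frontier C)
  set dy := infDist y (frontier C)
  have hsub : closedBall (a • x + b • y) (a * dx + b * dy) ⊆ C :=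
    calc closedBall (a • x + b • y) (a * dx + b * dy)
        = a • closedBall x dx + b • closedBall y dy := by
          rw [smul_closedBall _ _ infDist_nonneg, smul_closedBall _ _ infDist_nonneg,
            Real.norm_of_nonneg ha, Real.norm_of_nonneg hb,
            closedBall_add_closedBall (mul_nonneg ha infDist_nonneg)
              (mul_nonneg hb infDist_nonneg)]
      _ ⊆ a • C + b • C := add_subset_add
          (smul_set_mono (hCc.closedBall_infDist_frontier_subset hx))
          (smul_set_mono (hCc.closedBall_infDist_frontier_subset hy))
      _ ⊆ C := hC.set_combo_subset ha hb hab
  exact le_infDist_frontier_of_ball_subset (ball_subset_closedBall.trans hsub) hne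

end NormedSpace

/-- The erosion of a closed convex set by a closed ball is a convex open set. -/
theorem erosion_convex_isOpen {N : ℕ}
    (C : Set (EuclideanSpace ℝ (Fin N))) (hCc : IsClosed C) (hCconv : Convex ℝ C)
    (ρ : ℝ) (hρ : 0 ≤ ρ) :
    Convex ℝ {x ∈ C | ρ < Metric.infDist x (frontier C)} ∧
      IsOpen {x ∈ C | ρ < Metric.infDist x (frontier C)} :=
  ⟨(hCc.concaveOn_infDist_frontier hCconv).convex_gt ρ, isOpen_sep_lt_infDist_frontier C hρ⟩
end

section
/- Let Q be a closed convex subset of EuclideanSpace ℝ (Fin N), let p : Fin n → EuclideanSpace ℝ (Fin N) be a configuration that is collision-free in Q with radii ρ : Fin n → ℝ, where 0 ≤ ρ i for all i, and let F i be the free subcells of (Q, p, ρ). If q : Fin n → EuclideanSpace ℝ (Fin N) satisfies q i ∈ closure (F i) for every i, then for every t ∈ [0, 1) the intermediate configuration i ↦ p i + t • (q i - p i) is collision-free in Q with radii ρ. In particular, straight-line motion of each robot toward any target in the closure of its free subcell never produces a collision. -/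
open Metric Set

/-- The free subcell of index `i`: the erosion of the power cell `P i` by the closed
ball of radius `ρ i`. -/
def freeSubcell {N n : ℕ} (Q : Set (EuclideanSpace ℝ (Fin N)))
    (p : Fin n → EuclideanSpace ℝ (Fin N)) (ρ : Fin n → ℝ) (i : Fin n) :
    Set (EuclideanSpace ℝ (Fin N)) :=
  {x ∈ powerCell Q p ρ i | ρ i < Metric.infDist x (frontier (powerCell Q p ρ i))}

section aux
variable {N n : ℕ} {Q : Set (EuclideanSpace ℝ (Fin N))}
  {p : Fin n → EuclideanSpace ℝ (Fin N)} {ρ : Fin n → ℝ}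

lemma power_ineq_iff (p : Fin n → EuclideanSpace ℝ (Fin N)) (ρ : Fin n → ℝ)
    (i j : Fin n) (x : EuclideanSpace ℝ (Fin N)) :
    ‖x - p i‖ ^ 2 - ρ i ^ 2 ≤ ‖x - p j‖ ^ 2 - ρ j ^ 2 ↔
      inner (𝕜 := ℝ) x (p j - p i) ≤ (‖p j‖ ^ 2 - ‖p i‖ ^ 2 + ρ i ^ 2 - ρ j ^ 2) / 2 := by
  rw [norm_sub_sq_real, norm_sub_sq_real, inner_sub_right]
  constructor <;> intro h <;> linarith

lemma powerCell_convex (hQconv : Convex ℝ Q) (i : Fin n) : Convex ℝ (powerCell Q p ρ i) := by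
  intro x hx y hy a b ha hb hab
  obtain ⟨hxQ, hxj⟩ := hx
  obtain ⟨hyQ, hyj⟩ := hy
  refine ⟨hQconv hxQ hyQ ha hb hab, fun j => ?_⟩
  rw [power_ineq_iff]
  have h1 := (power_ineq_iff p ρ i j x).mp (hxj j)
  have h2 := (power_ineq_iff p ρ i j y).mp (hyj j)
  rw [inner_add_left, real_inner_smul_left, real_inner_smul_left]
  nlinarith [h1, h2]

lemma powerCell_closed (hQc : IsClosed Q) (i : Fin n) : IsClosed (powerCell Q p ρ i) := by
  have : powerCell Q p ρ i =
      Q ∩ ⋂ j, {x : EuclideanSpace ℝ (Fin N) |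
        ‖x - p i‖ ^ 2 - ρ i ^ 2 ≤ ‖x - p j‖ ^ 2 - ρ j ^ 2} := by
    ext x; simp [powerCell, Set.mem_iInter]
  rw [this]
  refine hQc.inter (isClosed_iInter fun j => isClosed_le ?_ ?_) <;> fun_prop

/-- The closed ball around `p i` lies in the interior of the power cell of `i`. -/
lemma ball_p_subset_interior
    (hsep : ∀ i j, i ≠ j → ρ i + ρ j < ‖p i - p j‖) (hρ : ∀ i, 0 ≤ ρ i)
    (hQ : ∀ i, Metric.closedBall (p i) (ρ i) ⊆ interior Q) (i : Fin n) :
    Metric.closedBall (p i) (ρ i) ⊆ interior (powerCell Q p ρ i) := by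
  set U : Set (EuclideanSpace ℝ (Fin N)) :=
    interior Q ∩ ⋂ j, {x | j = i ∨ ‖x - p i‖ ^ 2 - ρ i ^ 2 < ‖x - p j‖ ^ 2 - ρ j ^ 2} with hU
  have hUopen : IsOpen U := by
    refine isOpen_interior.inter (isOpen_iInter_of_finite fun j => ?_)
    by_cases h : j = i
    · simp [h]
    · have : {x : EuclideanSpace ℝ (Fin N) |
          j = i ∨ ‖x - p i‖ ^ 2 - ρ i ^ 2 < ‖x - p j‖ ^ 2 - ρ j ^ 2} =
          {x | ‖x - p i‖ ^ 2 - ρ i ^ 2 < ‖x - p j‖ ^ 2 - ρ j ^ 2} := by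
        ext x; simp [h]
      rw [this]
      exact isOpen_lt (by fun_prop) (by fun_prop)
  have hUP : U ⊆ powerCell Q p ρ i := by
    rintro x ⟨hxQ, hxj⟩
    refine ⟨interior_subset hxQ, fun j => ?_⟩
    have := mem_iInter.mp hxj j
    rcases this with h | h
    · subst h; exact le_refl _
    · exact le_of_lt h
  have hball : Metric.closedBall (p i) (ρ i) ⊆ U := by
    intro z hz
    have hzi : ‖z - p i‖ ≤ ρ i := by
      rwa [Metric.mem_closedBall, dist_eq_norm] at hz
    refine ⟨hQ i hz, mem_iInter.mpr fun j => ?_⟩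
    by_cases h : j = i
    · exact Or.inl h
    · refine Or.inr ?_
      have hsep' := hsep i j fun e => h e.symm
      have htri : ‖p i - p j‖ ≤ ‖p i - z‖ + ‖z - p j‖ := norm_sub_le_norm_sub_add_norm_sub _ _ _
      have h1 : ‖p i - z‖ = ‖z - p i‖ := norm_sub_rev _ _
      have h2 : 0 ≤ ‖z - p j‖ := norm_nonneg _
      have h3 : 0 ≤ ‖z - p i‖ := norm_nonneg _
      nlinarith [hρ i, hρ j]
  exact fun z hz => interior_maximal hUP hUopen (hball hz)

/-- The interior of the power cell of `i` is disjoint from the power cell of `j ≠ i`. -/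
lemma interior_powerCell_disjoint
    (hsep : ∀ i j, i ≠ j → ρ i + ρ j < ‖p i - p j‖) (hρ : ∀ i, 0 ≤ ρ i)
    {i j : Fin n} (hij : i ≠ j) {w : EuclideanSpace ℝ (Fin N)}
    (hwi : w ∈ interior (powerCell Q p ρ i)) (hwj : w ∈ powerCell Q p ρ j) : False := by
  set v : EuclideanSpace ℝ (Fin N) := p j - p i with hv
  have hvne : v ≠ 0 := by
    have := hsep i j hij
    have h0 : 0 < ‖p i - p j‖ := lt_of_le_of_lt (add_nonneg (hρ i) (hρ j)) this
    intro h
    rw [hv, sub_eq_zero] at h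
    rw [h, sub_self, norm_zero] at h0
    exact lt_irrefl 0 h0
  have hvnorm : 0 < ‖v‖ := norm_pos_iff.mpr hvne
  obtain ⟨δ, hδ, hball⟩ := Metric.isOpen_iff.mp isOpen_interior w hwi
  set ε : ℝ := δ / (2 * ‖v‖) with hε
  have hεpos : 0 < ε := div_pos hδ (by positivity)
  have hεv : ε * ‖v‖ = δ / 2 := by
    rw [hε]; field_simp
  have hw' : w + ε • v ∈ powerCell Q p ρ i := by
    refine interior_subset (hball ?_)
    rw [Metric.mem_ball, dist_eq_norm, add_sub_cancel_left, norm_smul,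
      Real.norm_eq_abs, abs_of_pos hεpos, hεv]
    linarith
  have heqi : ‖w - p i‖ ^ 2 - ρ i ^ 2 ≤ ‖w - p j‖ ^ 2 - ρ j ^ 2 :=
    (interior_subset hwi).2 j
  have heqj : ‖w - p j‖ ^ 2 - ρ j ^ 2 ≤ ‖w - p i‖ ^ 2 - ρ i ^ 2 := hwj.2 i
  have h1 := (power_ineq_iff p ρ i j w).mp heqi
  have h2 : (‖p j‖ ^ 2 - ‖p i‖ ^ 2 + ρ i ^ 2 - ρ j ^ 2) / 2 ≤ inner (𝕜 := ℝ) w (p j - p i) := by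
    have h3 := (power_ineq_iff p ρ j i w).mp heqj
    rw [inner_sub_right] at h3 ⊢
    linarith
  have h4 := (power_ineq_iff p ρ i j (w + ε • v)).mp (hw'.2 j)
  rw [inner_add_left, real_inner_smul_left, hv, real_inner_self_eq_norm_sq] at h4
  have hvpos : 0 < ‖v‖ ^ 2 := pow_pos hvnorm 2
  nlinarith

/-- Closed ball around a member of the free subcell is inside the power cell. -/
lemma ball_freeSubcell (hQc : IsClosed Q) (hρ : ∀ i, 0 ≤ ρ i) {i : Fin n}
    {x : EuclideanSpace ℝ (Fin N)} (hxP : x ∈ powerCell Q p ρ i)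
    (hxd : ρ i < Metric.infDist x (frontier (powerCell Q p ρ i))) :
    Metric.closedBall x (ρ i) ⊆ powerCell Q p ρ i := by
  have hPc : IsClosed (powerCell Q p ρ i) := powerCell_closed hQc i
  intro y hy
  by_contra hyP
  have hconn : IsPreconnected (Metric.closedBall x (ρ i)) :=
    (convex_closedBall x (ρ i)).isPreconnected
  have hnofr : ∀ z ∈ Metric.closedBall x (ρ i), z ∉ frontier (powerCell Q p ρ i) := by
    intro z hz hzf
    have h5 : Metric.infDist x (frontier (powerCell Q p ρ i)) ≤ dist x z :=
      Metric.infDist_le_dist_of_mem hzf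
    rw [Metric.mem_closedBall] at hz
    rw [dist_comm] at h5
    linarith
  have hcover : Metric.closedBall x (ρ i) ⊆
      interior (powerCell Q p ρ i) ∪ (powerCell Q p ρ i)ᶜ := by
    intro z hz
    by_cases h : z ∈ powerCell Q p ρ i
    · left
      rcases em (z ∈ interior (powerCell Q p ρ i)) with h' | h'
      · exact h'
      · exact absurd ⟨subset_closure h, h'⟩ (hnofr z hz)
    · exact Or.inr h
  have h1 : (Metric.closedBall x (ρ i) ∩ interior (powerCell Q p ρ i)).Nonempty := by
    refine ⟨x, Metric.mem_closedBall_self (hρ i), ?_⟩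
    rcases em (x ∈ interior (powerCell Q p ρ i)) with h' | h'
    · exact h'
    · exact absurd ⟨subset_closure hxP, h'⟩ (hnofr x (Metric.mem_closedBall_self (hρ i)))
  have h2 : (Metric.closedBall x (ρ i) ∩ (powerCell Q p ρ i)ᶜ).Nonempty := ⟨y, hy, hyP⟩
  obtain ⟨z, _, hz1, hz2⟩ := hconn _ _ isOpen_interior hPc.isOpen_compl hcover h1 h2
  exact hz2 (interior_subset hz1)

end aux

/-- Straight-line motion of each robot toward any target in the closure of its free
subcell never produces a collision. -/
theorem collisionFree_segment_toward_freeSubcell {N n : ℕ}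
    (Q : Set (EuclideanSpace ℝ (Fin N))) (hQc : IsClosed Q) (hQconv : Convex ℝ Q)
    (p : Fin n → EuclideanSpace ℝ (Fin N)) (ρ : Fin n → ℝ)
    (hρ : ∀ i, 0 ≤ ρ i) (hp : CollisionFree Q p ρ)
    (q : Fin n → EuclideanSpace ℝ (Fin N))
    (hq : ∀ i, q i ∈ closure (freeSubcell Q p ρ i)) :
    ∀ t ∈ Set.Ico (0 : ℝ) 1,
      CollisionFree Q (fun i => p i + t • (q i - p i)) ρ := by
  obtain ⟨hsep, hQint⟩ := hp
  rintro t ⟨ht0, ht1⟩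
  set z : Fin n → EuclideanSpace ℝ (Fin N) := fun i => p i + t • (q i - p i) with hz
  have hPclosed : ∀ i, IsClosed (powerCell Q p ρ i) := powerCell_closed hQc
  have hPconv : ∀ i, Convex ℝ (powerCell Q p ρ i) := powerCell_convex hQconv
  have hpball : ∀ i, Metric.closedBall (p i) (ρ i) ⊆ interior (powerCell Q p ρ i) :=
    ball_p_subset_interior hsep hρ hQint
  -- the closed ball around q i is inside the power cell
  have hqball : ∀ i, Metric.closedBall (q i) (ρ i) ⊆ powerCell Q p ρ i := by
    intro i y hy
    rw [Metric.mem_closedBall, dist_eq_norm] at hy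
    have key : (fun x => x + (y - q i)) '' (freeSubcell Q p ρ i) ⊆ powerCell Q p ρ i := by
      rintro _ ⟨x, hx, rfl⟩
      refine ball_freeSubcell hQc hρ hx.1 hx.2 ?_
      rw [Metric.mem_closedBall, dist_eq_norm, add_sub_cancel_left]
      exact hy
    have h2 : y ∈ (fun x => x + (y - q i)) '' closure (freeSubcell Q p ρ i) :=
      ⟨q i, hq i, by module⟩
    have h3 := image_closure_subset_closure_image
      (f := fun x : EuclideanSpace ℝ (Fin N) => x + (y - q i)) (by fun_prop) h2
    have h4 := closure_mono key h3
    rwa [(hPclosed i).closure_eq] at h4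
  have hqQ : ∀ i, Metric.closedBall (q i) (ρ i) ⊆ Q :=
    fun i => (hqball i).trans fun x hx => hx.1
  -- the closed ball around z i is inside the interior of the power cell
  have hzball : ∀ i, Metric.closedBall (z i) (ρ i) ⊆ interior (powerCell Q p ρ i) := by
    intro i y hy
    rw [Metric.mem_closedBall, dist_eq_norm] at hy
    have hmem1 : p i + (y - z i) ∈ Metric.closedBall (p i) (ρ i) := by
      rw [Metric.mem_closedBall, dist_eq_norm, add_sub_cancel_left]
      exact hy
    have hmem2 : q i + (y - z i) ∈ Metric.closedBall (q i) (ρ i) := by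
      rw [Metric.mem_closedBall, dist_eq_norm, add_sub_cancel_left]
      exact hy
    have key : y = (1 - t) • (p i + (y - z i)) + t • (q i + (y - z i)) := by
      simp only [hz]
      module
    rw [key]
    exact (hPconv i).combo_interior_self_mem_interior
      (hpball i hmem1) (hqball i hmem2) (by linarith) ht0 (by ring)
  -- the closed ball around z i is inside the interior of Q
  have hzQ : ∀ i, Metric.closedBall (z i) (ρ i) ⊆ interior Q := by
    intro i y hy
    rw [Metric.mem_closedBall, dist_eq_norm] at hy
    have hmem1 : p i + (y - z i) ∈ Metric.closedBall (p i) (ρ i) := by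
      rw [Metric.mem_closedBall, dist_eq_norm, add_sub_cancel_left]
      exact hy
    have hmem2 : q i + (y - z i) ∈ Metric.closedBall (q i) (ρ i) := by
      rw [Metric.mem_closedBall, dist_eq_norm, add_sub_cancel_left]
      exact hy
    have key : y = (1 - t) • (p i + (y - z i)) + t • (q i + (y - z i)) := by
      simp only [hz]
      module
    rw [key]
    exact hQconv.combo_interior_self_mem_interior
      (hQint i hmem1) (hqQ i hmem2) (by linarith) ht0 (by ring)
  refine ⟨fun i j hij => ?_, fun i => hzQ i⟩
  by_contra hcon
  push_neg at hcon
  rcases eq_or_lt_of_le (add_nonneg (hρ i) (hρ j)) with hs0 | hspos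
  · have hρi : ρ i = 0 := le_antisymm (by linarith [hρ j]) (hρ i)
    have hρj : ρ j = 0 := by linarith
    have hzz : z i = z j := by
      have h6 : ‖z i - z j‖ ≤ 0 := by
        calc ‖z i - z j‖ ≤ ρ i + ρ j := hcon
        _ = 0 := hs0.symm
      have := le_antisymm h6 (norm_nonneg _)
      rwa [norm_eq_zero, sub_eq_zero] at this
    refine interior_powerCell_disjoint hsep hρ hij
      (hzball i (Metric.mem_closedBall_self (hρ i)))
      (interior_subset (hzball j ?_))
    rw [hzz]
    exact Metric.mem_closedBall_self (hρ j)
  · set s : ℝ := ρ i + ρ j with hsdef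
    set w : EuclideanSpace ℝ (Fin N) := z i + (ρ i / s) • (z j - z i) with hw
    have hsne : s ≠ 0 := ne_of_gt hspos
    have hnorm : ‖z j - z i‖ ≤ s := by
      rw [norm_sub_rev]
      exact hcon
    have hwi : w ∈ Metric.closedBall (z i) (ρ i) := by
      rw [Metric.mem_closedBall, dist_eq_norm, hw, add_sub_cancel_left, norm_smul,
        Real.norm_eq_abs, abs_of_nonneg (div_nonneg (hρ i) hspos.le)]
      calc ρ i / s * ‖z j - z i‖ ≤ ρ i / s * s :=
            mul_le_mul_of_nonneg_left hnorm (div_nonneg (hρ i) hspos.le)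
        _ = ρ i := div_mul_cancel₀ _ hsne
    have hwj : w ∈ Metric.closedBall (z j) (ρ j) := by
      have hwzj : w - z j = (ρ j / s) • (z i - z j) := by
        have hc : ρ j / s = 1 - ρ i / s := by
          field_simp
          ring
        rw [hw, hc]
        module
      rw [Metric.mem_closedBall, dist_eq_norm, hwzj, norm_smul,
        Real.norm_eq_abs, abs_of_nonneg (div_nonneg (hρ j) hspos.le)]
      calc ρ j / s * ‖z i - z j‖ ≤ ρ j / s * s := by
            rw [norm_sub_rev] at hnorm
            exact mul_le_mul_of_nonneg_left hnorm (div_nonneg (hρ j) hspos.le)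
        _ = ρ j := div_mul_cancel₀ _ hsne
    exact interior_powerCell_disjoint hsep hρ hij
      (hzball i hwi) (interior_subset (hzball j hwj))
end

section
/- Let E be a real inner product space and let p, c, c̄ ∈ E satisfy ‖c - c̄‖ ≤ ‖c - p‖ and p ≠ c̄. Then 0 < ⟪p - c, p - c̄⟫; i.e., the move-to-constrained-centroid direction is a strict descent direction whenever the robot is not already at the constrained centroid. -/
open scoped RealInnerProductSpace

/-- The move-to-constrained-centroid direction is a strict descent direction:
if `‖c - c̄‖ ≤ ‖c - p‖` and `p ≠ c̄`, then `0 < ⟪p - c, p - c̄⟫`. -/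
theorem inner_descent_pos {E : Type*} [NormedAddCommGroup E]
    [InnerProductSpace ℝ E] (p c cbar : E) (h : ‖c - cbar‖ ≤ ‖c - p‖)
    (hne : p ≠ cbar) :
    0 < ⟪p - c, p - cbar⟫ := by
  have key : ‖(p - c) - (p - cbar)‖ ^ 2 =
      ‖p - c‖ ^ 2 - 2 * ⟪p - c, p - cbar⟫ + ‖p - cbar‖ ^ 2 := by
    exact norm_sub_sq_real _ _
  have h1 : (p - c) - (p - cbar) = cbar - c := by abel
  rw [h1] at key
  have h2 : ‖cbar - c‖ = ‖c - cbar‖ := norm_sub_rev _ _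
  have h3 : ‖c - p‖ = ‖p - c‖ := norm_sub_rev _ _
  have hb : 0 < ‖p - cbar‖ := by
    rw [norm_pos_iff]; exact sub_ne_zero_of_ne hne
  nlinarith [sq_nonneg (‖c - cbar‖), norm_nonneg (c - cbar), norm_nonneg (p - c)]
end

section
/- Let V be a subset of EuclideanSpace ℝ (Fin N) and φ : EuclideanSpace ℝ (Fin N) → ℝ a density such that φ, the map q ↦ φ q • q, and the map q ↦ φ q * ‖q‖^2 are all integrable on V with respect to the volume measure. Set m := ∫ q in V, φ q and b := ∫ q in V, φ q • q. Then at every point p the function f(p) := ∫ q in V, φ q * ‖q - p‖^2 has gradient 2 • (m • p - b); in particular, when m ≠ 0 the gradient equals 2m(p - c) where c = m⁻¹ • b is the centroid of V with respect to the density φ. -/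
open MeasureTheory
open scoped RealInnerProductSpace

/-!
Expanding `‖q - x‖² = ‖q‖² - 2⟪q, x⟫ + ‖x‖²` under the integral writes the cost as the quadratic
polynomial `x ↦ ∫ φ ‖q‖² - 2⟪b, x⟫ + m ‖x‖²`, whose gradient at `p` is `-2b + 2mp`.
-/

section

variable {E : Type*} [NormedAddCommGroup E] [InnerProductSpace ℝ E] [CompleteSpace E]

theorem integral_mul_norm_sub_sq_eq [MeasurableSpace E] {μ : Measure E} {φ : E → ℝ}
    (hφ : Integrable φ μ) (hφq : Integrable (fun q => φ q • q) μ)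
    (hφsq : Integrable (fun q => φ q * ‖q‖ ^ 2) μ) (x : E) :
    ∫ q, φ q * ‖q - x‖ ^ 2 ∂μ
      = (∫ q, φ q * ‖q‖ ^ 2 ∂μ) - 2 * ⟪∫ q, φ q • q ∂μ, x⟫ + (∫ q, φ q ∂μ) * ‖x‖ ^ 2 := by
  have hexpand : ∀ q, φ q * ‖q - x‖ ^ 2 = φ q * ‖q‖ ^ 2 - 2 * ⟪x, φ q • q⟫ + φ q * ‖x‖ ^ 2 := by
    intro q
    rw [norm_sub_sq_real, real_inner_smul_right, real_inner_comm]
    ring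
  have hinner : Integrable (fun q => 2 * ⟪x, φ q • q⟫) μ :=
    ((innerSL ℝ x).integrable_comp hφq).const_mul 2
  simp_rw [hexpand]
  rw [integral_add (f := fun q => φ q * ‖q‖ ^ 2 - 2 * ⟪x, φ q • q⟫) (hφsq.sub hinner)
      (hφ.mul_const _), integral_sub hφsq hinner,
    integral_const_mul, integral_inner hφq, integral_mul_const, real_inner_comm]

theorem hasGradientAt_quadratic (c m : ℝ) (b p : E) :
    HasGradientAt (fun x => c - 2 * ⟪b, x⟫ + m * ‖x‖ ^ 2) ((2 : ℝ) • (m • p - b)) p := by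
  rw [hasGradientAt_iff_hasFDerivAt]
  have hlinear : HasFDerivAt (fun x => 2 * ⟪b, x⟫) ((2 : ℝ) • innerSL ℝ b) p := by
    simpa using ((innerSL ℝ b).hasFDerivAt (x := p)).const_mul (2 : ℝ)
  have hnormSq : HasFDerivAt (fun x => m * ‖x‖ ^ 2) (m • (2 • innerSL ℝ p)) p :=
    (hasStrictFDerivAt_norm_sq p).hasFDerivAt.const_mul m
  refine (((hasFDerivAt_const c p).sub hlinear).add hnormSq).congr_fderiv ?_
  ext v
  simp only [zero_sub, add_apply, neg_apply,
    smul_apply, coe_innerSL_apply, smul_eq_mul, nsmul_eq_mul, Nat.cast_ofNat,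
    map_smul, map_sub, sub_apply, InnerProductSpace.toDual_apply_apply]
  ring

end

/-- The gradient of the expected sensing cost `p ↦ ∫_V φ(q) ‖q - p‖² dq` over a fixed
region `V` is `2 (m p - b)`, where `m` is the mass and `b` the first moment of `V`
with respect to the density `φ`. -/
theorem hasGradientAt_expected_sensing_cost {N : ℕ}
    (V : Set (EuclideanSpace ℝ (Fin N))) (φ : EuclideanSpace ℝ (Fin N) → ℝ)
    (hφ : IntegrableOn φ V volume)
    (hφq : IntegrableOn (fun q => φ q • q) V volume)
    (hφsq : IntegrableOn (fun q => φ q * ‖q‖ ^ 2) V volume)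
    (m : ℝ) (hm : m = ∫ q in V, φ q)
    (b : EuclideanSpace ℝ (Fin N)) (hb : b = ∫ q in V, φ q • q)
    (p : EuclideanSpace ℝ (Fin N)) :
    HasGradientAt (fun x : EuclideanSpace ℝ (Fin N) => ∫ q in V, φ q * ‖q - x‖ ^ 2)
      ((2 : ℝ) • (m • p - b)) p := by
  have hcost : (fun x : EuclideanSpace ℝ (Fin N) => ∫ q in V, φ q * ‖q - x‖ ^ 2)
      = fun x => (∫ q in V, φ q * ‖q‖ ^ 2) - 2 * ⟪b, x⟫ + m * ‖x‖ ^ 2 := by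
    funext x
    rw [integral_mul_norm_sub_sq_eq hφ hφq hφsq, hm, hb]
  rw [hcost]
  exact hasGradientAt_quadratic _ m b p
end
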